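/- arXiv:1408.6162 — 2 statements merged into one kernel-verified Lean document; each statement's English description precedes it below -/
import Mathlib

section
/- Let A be a self-adjoint tridiagonal operator on ℓ²(ℕ₀) (with respect to the standard basis (e_n)), with matrix entries a_{n,m} = ⟨A e_m, e_n⟩ vanishing for |n−m| > 1. If a_{n,n} > 0 for all n and a_{n,n} a_{n+1,n+1} − 4 |a_{n,n+1}|² > 0 for all n, then ⟨A ξ, ξ⟩ ≥ 0 for all ξ in the linear span of the basis vectors. -/
/-
Since `A` is Hermitian, `⟨Aξ, ξ⟩` is real, and by tridiagonality it equals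
`∑ a_{n,n} |ξ_n|² + 2 ∑ Re (conj ξ_n a_{n,n+1} ξ_{n+1})`. The hypothesis
`4 |a_{n,n+1}|² < a_{n,n} a_{n+1,n+1}` gives the AM-GM bound
`2 |a_{n,n+1}| |ξ_n| |ξ_{n+1}| ≤ (a_{n,n} |ξ_n|² + a_{n+1,n+1} |ξ_{n+1}|²) / 2`, so every diagonal term
is used by at most its two neighbouring cross terms, half by each, and the cross terms cannot
outweigh the diagonal.
-/

open scoped ComplexOrder
open Finset ComplexConjugate

noncomputable section

def Qf (A : ℕ → ℕ → ℂ) (ξ : ℕ →₀ ℂ) : ℂ :=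
  ∑ a ∈ ξ.support, ∑ b ∈ ξ.support, (starRingEnd ℂ) (ξ a) * A a b * ξ b

theorem sum_range_sum_range_of_tridiagonal {M : Type*} [AddCommMonoid M] (f : ℕ → ℕ → M)
    (hf : ∀ a b, (1 < a - b ∨ 1 < b - a) → f a b = 0) (N : ℕ) :
    ∑ a ∈ range (N + 1), ∑ b ∈ range (N + 1), f a b
      = ∑ a ∈ range (N + 1), f a a + ∑ a ∈ range N, (f a (a + 1) + f (a + 1) a) := by
  induction N with
  | zero => simp
  | succ N ih =>
    have last_column : ∑ a ∈ range (N + 1), f a (N + 1) = f N (N + 1) :=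
      sum_eq_single_of_mem N (by simp) fun a ha _ ↦ hf a _ (.inr (by simp at ha; omega))
    have last_row : ∑ b ∈ range (N + 1), f (N + 1) b = f (N + 1) N :=
      sum_eq_single_of_mem N (by simp) fun b hb _ ↦ hf _ b (.inl (by simp at hb; omega))
    rw [sum_range_succ (fun a ↦ ∑ b ∈ range (N + 2), f a b), sum_range_succ (fun a ↦ f a a),
      sum_range_succ (fun a ↦ f a (a + 1) + f (a + 1) a)]
    simp only [sum_range_succ (f _) (N + 1)]
    rw [sum_add_distrib, ih, last_column, last_row]
    abel

theorem two_mul_mul_mul_le_of_four_mul_sq_le {d e c : ℝ} (hd : 0 < d) (h : 4 * c ^ 2 ≤ d * e)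
    (x y : ℝ) : 2 * (c * x * y) ≤ (d * x ^ 2 + e * y ^ 2) / 2 := by
  -- `2 d (rhs - lhs) = (d x - 2 c y)² + (d e - 4 c²) y²`
  nlinarith [sq_nonneg (d * x - 2 * c * y), mul_nonneg (sub_nonneg.2 h) (sq_nonneg y)]

theorem two_mul_sum_range_le_sum_range_succ {d c : ℕ → ℝ} (hd : ∀ n, 0 < d n)
    (h : ∀ n, 4 * c n ^ 2 ≤ d n * d (n + 1)) (x : ℕ → ℝ) (N : ℕ) :
    2 * ∑ n ∈ range N, c n * x n * x (n + 1) ≤ ∑ n ∈ range (N + 1), d n * x n ^ 2 := by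
  have hdx : ∀ n, 0 ≤ d n * x n ^ 2 := fun n ↦ mul_nonneg (hd n).le (sq_nonneg _)
  calc 2 * ∑ n ∈ range N, c n * x n * x (n + 1)
      ≤ ∑ n ∈ range N, (d n * x n ^ 2 + d (n + 1) * x (n + 1) ^ 2) / 2 := by
        rw [mul_sum]
        exact sum_le_sum fun n _ ↦ two_mul_mul_mul_le_of_four_mul_sq_le (hd n) (h n) _ _
    _ = (∑ n ∈ range N, d n * x n ^ 2 + ∑ n ∈ range N, d (n + 1) * x (n + 1) ^ 2) / 2 := by
        rw [← sum_div, sum_add_distrib]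
    _ ≤ (∑ n ∈ range (N + 1), d n * x n ^ 2 + ∑ n ∈ range (N + 1), d n * x n ^ 2) / 2 := by
        linarith [hdx N, hdx 0, sum_range_succ (fun n ↦ d n * x n ^ 2) N,
          sum_range_succ' (fun n ↦ d n * x n ^ 2) N]
    _ = ∑ n ∈ range (N + 1), d n * x n ^ 2 := by ring

namespace Complex

theorem re_conj_mul_mul_self (z a : ℂ) : (conj z * a * z).re = a.re * ‖z‖ ^ 2 := by
  rw [mul_right_comm, conj_mul', ← ofReal_pow, re_ofReal_mul, mul_comm]

theorem neg_norm_mul_le_re_conj_mul_mul (z a w : ℂ) :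
    -(‖a‖ * ‖z‖ * ‖w‖) ≤ (conj z * a * w).re := by
  have h := (abs_le.1 (abs_re_le_norm (conj z * a * w))).1
  rwa [norm_mul, norm_mul, RCLike.norm_conj, mul_comm ‖z‖] at h

end Complex

section Qf

variable {A : ℕ → ℕ → ℂ}

theorem Qf_eq_sum_of_support_subset {ξ : ℕ →₀ ℂ} {s : Finset ℕ}
    (hs : ξ.support ⊆ s) :
    Qf A ξ = ∑ a ∈ s, ∑ b ∈ s, conj (ξ a) * A a b * ξ b := by
  have vanish : ∀ a ∉ ξ.support, ξ a = 0 := fun a ↦ Finsupp.notMem_support_iff.1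
  rw [Qf, sum_subset hs fun a _ ha ↦ by simp [vanish a ha]]
  exact sum_congr rfl fun a _ ↦ sum_subset hs fun b _ hb ↦ by simp [vanish b hb]

theorem conj_Qf (hsym : ∀ n m, A n m = conj (A m n)) (ξ : ℕ →₀ ℂ) :
    conj (Qf A ξ) = Qf A ξ := by
  simp only [Qf, map_sum, map_mul, Complex.conj_conj, ← hsym]
  rw [sum_comm]
  exact sum_congr rfl fun a _ ↦ sum_congr rfl fun b _ ↦ by ring

theorem re_Qf_eq_of_support_subset (hsym : ∀ n m, A n m = conj (A m n))
    (htri : ∀ n m : ℕ, (1 < n - m ∨ 1 < m - n) → A n m = 0) {ξ : ℕ →₀ ℂ} {N : ℕ}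
    (hN : ξ.support ⊆ range (N + 1)) :
    (Qf A ξ).re = ∑ n ∈ range (N + 1), (A n n).re * ‖ξ n‖ ^ 2
      + 2 * ∑ n ∈ range N, (conj (ξ n) * A n (n + 1) * ξ (n + 1)).re := by
  have hf : ∀ a b, (1 < a - b ∨ 1 < b - a) → conj (ξ a) * A a b * ξ b = 0 :=
    fun a b h ↦ by rw [htri a b h, mul_zero, zero_mul]
  have swap : ∀ a b, conj (ξ b) * A b a * ξ a = conj (conj (ξ a) * A a b * ξ b) := fun a b ↦ by
    rw [map_mul, map_mul, Complex.conj_conj, ← hsym]; ring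
  rw [Qf_eq_sum_of_support_subset hN, sum_range_sum_range_of_tridiagonal _ hf, Complex.add_re,
    Complex.re_sum, Complex.re_sum, mul_sum]
  simp only [Complex.re_conj_mul_mul_self, Complex.add_re, swap _ (_ + 1), Complex.conj_re,
    two_mul]

end Qf

/-- **Positivity criterion for tridiagonal matrices.**
If A is a symmetric tridiagonal matrix with positive diagonal entries such that
`a_{n,n} a_{n+1,n+1} − 4 |a_{n,n+1}|² > 0` for all n, then ⟨Aξ,ξ⟩ ≥ 0 for all ξ
in the span of the basis vectors. -/
theorem tridiagonal_positivity
    (A : ℕ → ℕ → ℂ)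
    (hsym : ∀ n m, A n m = (starRingEnd ℂ) (A m n))
    (htri : ∀ n m : ℕ, (1 < n - m ∨ 1 < m - n) → A n m = 0)
    (hdiag : ∀ n, 0 < (A n n).re)
    (hdet : ∀ n, 4 * ‖A n (n+1)‖ ^ 2 < (A n n).re * (A (n+1) (n+1)).re) :
    ∀ ξ : ℕ →₀ ℂ, 0 ≤ Qf A ξ := by
  intro ξ
  set N := ξ.support.sup id
  have hN : ξ.support ⊆ range (N + 1) := subset_range_sup_succ _
  have real : (Qf A ξ).im = 0 := Complex.conj_eq_iff_im.1 (conj_Qf hsym ξ)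
  have cross_le : 2 * ∑ n ∈ range N, ‖A n (n + 1)‖ * ‖ξ n‖ * ‖ξ (n + 1)‖
      ≤ ∑ n ∈ range (N + 1), (A n n).re * ‖ξ n‖ ^ 2 :=
    two_mul_sum_range_le_sum_range_succ hdiag (fun n ↦ (hdet n).le) _ N
  have cross_ge : -∑ n ∈ range N, ‖A n (n + 1)‖ * ‖ξ n‖ * ‖ξ (n + 1)‖
      ≤ ∑ n ∈ range N, (conj (ξ n) * A n (n + 1) * ξ (n + 1)).re := by
    rw [← sum_neg_distrib]
    exact sum_le_sum fun n _ ↦ Complex.neg_norm_mul_le_re_conj_mul_mul _ _ _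
  refine Complex.nonneg_iff.2 ⟨?_, real.symm⟩
  rw [re_Qf_eq_of_support_subset hsym htri hN]
  linarith
end
end

section
/- Let T be a quantum birth and death chain on B(ℓ²(ℕ₀)), and let A be an operator with domain D = span{e_n} satisfying ⟨A ξ, ξ⟩ ≥ 0 for all ξ ∈ D. Then ⟨T^n(A) ξ, ξ⟩ ≥ 0 for all ξ ∈ D and all n ∈ ℕ, where T is extended to unbounded tridiagonal-supported operators via T(A) := strong-lim_N ∑_{0≤n,m≤N} A_{n,m} T(e_{n,m}). -/
/-!
Complete positivity and `T(e_{nn}) ≤ p_{[n-1,n+1]}` force `⟨e_a, T(e_{nm}) e_b⟩ = 0` unless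
`|a - n| ≤ 1` and `|b - m| ≤ 1`: a positive semidefinite `2 × 2` Gram matrix
`(⟨ξ_i, T(a_i^* a_j) ξ_j⟩)` with a vanishing diagonal entry has vanishing off-diagonal entries.
Hence, for `ξ ∈ D` and `η = ∑ ξ_b e_b`, `⟨T(A) ξ, ξ⟩ = ∑_{n,m ∈ R} A_{nm} ⟨η, T(e_{nm}) η⟩` over
a finite window `R`. Writing `e_{nm} = e_{0n}^* e_{0m}`, complete positivity makes
`(⟨η, T(e_{nm}) η⟩)_{n,m ∈ R}` positive semidefinite, so this is the sum of the entries of the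
Schur product of two positive semidefinite matrices, which is nonnegative. Iterate for `T^n`.
-/

open scoped ComplexOrder
open Filter

noncomputable section

abbrev H2 : Type := lp (fun _ : ℕ => ℂ) 2

abbrev BH : Type := H2 →L[ℂ] H2

def ee (n : ℕ) : H2 := lp.single 2 n 1

/-- matrix unit e_{n,m} : e_k ↦ δ_{m,k} e_n -/
def mU (n m : ℕ) : BH := (innerSL ℂ (ee m)).smulRight (ee n)

/-- projection onto span{e_k : n ≤ k ≤ m} -/
def pI (n m : ℕ) : BH := ∑ k ∈ Finset.Icc n m, mU k k

def IsUCP (T : BH → BH) : Prop :=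
  T 1 = 1 ∧ (∀ x y : BH, T (x + y) = T x + T y) ∧
  (∀ (c : ℂ) (x : BH), T (c • x) = c • T x) ∧
  ∀ (n : ℕ) (a : Fin n → BH) (ξ : Fin n → H2),
    0 ≤ ∑ i, ∑ j, (inner ℂ (ξ i) (T (star (a i) * a j) (ξ j)) : ℂ)

def IsQBDC (T : BH → BH) : Prop :=
  IsUCP T ∧ ∀ n m : ℕ, n ≤ m →
    (T (pI n m) - pI (n+1) (m-1)).IsPositive ∧
    (pI (n-1) (m+1) - T (pI n m)).IsPositive

def IsNormalState (φ : BH → ℂ) : Prop :=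
  ∃ ξ : ℕ → H2, Summable (fun k => ‖ξ k‖ ^ 2) ∧ (∑' k, ‖ξ k‖ ^ 2) = 1 ∧
    ∀ x : BH, φ x = ∑' k, (inner ℂ (ξ k) (x (ξ k)) : ℂ)

def InvState (T : BH → BH) (φ : BH → ℂ) : Prop := ∀ x, φ (T x) = φ x

/-- birth rate λ_n = Tr(e_{n,n} T(e_{n+1,n+1})) -/
def lamr (T : BH → BH) (n : ℕ) : ℝ := (inner ℂ (ee n) (T (mU (n+1) (n+1)) (ee n)) : ℂ).re

/-- death rate μ_n = Tr(e_{n,n} T(e_{n-1,n-1})) -/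
def mur (T : BH → BH) (n : ℕ) : ℝ := (inner ℂ (ee n) (T (mU (n-1) (n-1)) (ee n)) : ℂ).re

/-- η_n = Tr(e_{n+1,n} T(e_{n,n})) -/
def etar (T : BH → BH) (n : ℕ) : ℂ := (inner ℂ (ee n) (T (mU n n) (ee (n+1))) : ℂ)

/-- application of a QBDC to an (unbounded) operator encoded by its matrix -/
def TU (T : BH → BH) (A : ℕ → ℕ → ℂ) : ℕ → ℕ → ℂ := fun a b =>
  ∑ n ∈ Finset.Icc (a-1) (a+1), ∑ m ∈ Finset.Icc (b-1) (b+1),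
    A n m * (inner ℂ (ee a) (T (mU n m) (ee b)) : ℂ)

open scoped InnerProductSpace
open Finset

namespace Matrix

variable {n : Type*}

theorem PosSemidef.of_dotProduct_mulVec_nonneg_complex [Fintype n] {M : Matrix n n ℂ}
    (hM : ∀ x, 0 ≤ star x ⬝ᵥ M *ᵥ x) : M.PosSemidef := by
  classical
  rw [← isPositive_toEuclideanLin_iff, LinearMap.isPositive_iff_complex]
  intro v
  have hv := hM v
  have hstar : v.ofLp ⬝ᵥ star (M *ᵥ v.ofLp) = star (star v.ofLp ⬝ᵥ M *ᵥ v.ofLp) := by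
    rw [star_dotProduct, star_star, dotProduct_comm]
  rw [EuclideanSpace.inner_eq_star_dotProduct, ofLp_toLpLin, toLin'_apply, hstar,
    (IsSelfAdjoint.of_nonneg hv).star_eq]
  exact ⟨RCLike.conj_eq_iff_re.1 (IsSelfAdjoint.of_nonneg hv).star_eq, (RCLike.nonneg_iff.1 hv).1⟩

theorem PosSemidef.of_finsupp_sum_nonneg_complex {M : Matrix n n ℂ}
    (hM : ∀ x : n →₀ ℂ, 0 ≤ x.sum fun i xi ↦ x.sum fun j xj ↦ star xi * M i j * xj) :
    M.PosSemidef := by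
  refine ⟨?_, hM⟩
  ext i j
  let e := ![i, j]
  have hsub : ∀ x : Fin 2 →₀ ℂ,
      0 ≤ x.sum fun a xa ↦ x.sum fun b xb ↦ star xa * M (e a) (e b) * xb := fun x ↦ by
    simpa [Finsupp.sum_mapDomain_index, add_mul, mul_add] using hM (x.mapDomain e)
  have hpsd : (M.submatrix e e).PosSemidef := by
    refine .of_dotProduct_mulVec_nonneg_complex fun x ↦ ?_
    simpa [dotProduct, mulVec, Finsupp.sum_fintype, Finset.mul_sum, mul_assoc, mul_add] using
      hsub (Finsupp.equivFunOnFinite.symm x)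
  simpa [e] using hpsd.1.apply 0 1

theorem PosSemidef.apply_eq_zero_of_diag_eq_zero [Fintype n] {M : Matrix n n ℂ}
    (hM : M.PosSemidef) {i j : n} (h : M i i = 0 ∨ M j j = 0) : M i j = 0 := by
  classical
  have col : ∀ {k}, M k k = 0 → ∀ l, M l k = 0 := by
    intro k hk l
    have := (hM.dotProduct_mulVec_zero_iff (Pi.single k 1)).1 (by simp [hk])
    simpa using congrFun this l
  rcases h with h | h
  · rw [← hM.1.apply, col h, star_zero]
  · exact col h i

theorem PosSemidef.sum_hadamard_nonneg {𝕜 : Type*} [RCLike 𝕜] [Fintype n] {A B : Matrix n n 𝕜}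
    (hA : A.PosSemidef) (hB : B.PosSemidef) : 0 ≤ ∑ i, ∑ j, A i j * B i j := by
  simpa [dotProduct, mulVec, Finset.mul_sum] using (hA.hadamard hB).dotProduct_mulVec_nonneg 1

end Matrix

lemma inner_ee (a b : ℕ) : ⟪ee a, ee b⟫_ℂ = if a = b then 1 else 0 := by
  rw [ee, ee, lp.inner_single_left]
  simp [lp.single_apply, Pi.single_apply]

lemma mU_apply (n m : ℕ) (x : H2) : mU n m x = ⟪ee m, x⟫_ℂ • ee n := rfl

lemma mU_apply_ee (n m b : ℕ) : mU n m (ee b) = if m = b then ee n else 0 := by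
  rw [mU_apply, inner_ee]; split_ifs <;> simp

lemma star_mU (n m : ℕ) : star (mU n m) = mU m n := by
  rw [ContinuousLinearMap.star_eq_adjoint, eq_comm, ContinuousLinearMap.eq_adjoint_iff]
  intro x y
  rw [mU_apply, mU_apply, inner_smul_left, inner_smul_right, ← inner_conj_symm x (ee n)]
  ring

lemma mU_mul (n k k' m : ℕ) : mU n k * mU k' m = if k = k' then mU n m else 0 := by
  ext x
  simp only [mul_apply_eq_comp, mU_apply, inner_smul_right, inner_ee]
  split_ifs <;> simp [mU_apply]

lemma star_mU_zero_mul (n m : ℕ) : star (mU 0 n) * mU 0 m = mU n m := by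
  simp [star_mU, mU_mul]

lemma pI_apply_ee (n m b : ℕ) : pI n m (ee b) = if b ∈ Icc n m then ee b else 0 := by
  simp only [pI, _root_.sum_apply, mU_apply_ee, sum_ite_eq']

lemma pI_self (n : ℕ) : pI n n = mU n n := by
  rw [pI, Icc_self, sum_singleton]

/-- `Qf A ξ` unfolds to the `Finsupp.sum` form in the definition of `Matrix.PosSemidef`. -/
lemma posSemidef_of_Qf_nonneg {A : ℕ → ℕ → ℂ} (hA : ∀ ξ, 0 ≤ Qf A ξ) :
    (Matrix.of A).PosSemidef :=
  Matrix.PosSemidef.of_finsupp_sum_nonneg_complex hA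

lemma Qf_inner_ee (X : BH) (ξ : ℕ →₀ ℂ) :
    Qf (fun a b ↦ ⟪ee a, X (ee b)⟫_ℂ) ξ =
      ⟪Finsupp.linearCombination ℂ ee ξ, X (Finsupp.linearCombination ℂ ee ξ)⟫_ℂ := by
  rw [Qf, Finsupp.linearCombination_apply, Finsupp.sum, map_sum, sum_inner]
  refine sum_congr rfl fun a _ ↦ ?_
  rw [inner_smul_left, inner_sum, mul_sum]
  refine sum_congr rfl fun b _ ↦ ?_
  rw [map_smul, inner_smul_right]
  ring

namespace IsUCP

variable {T : BH → BH}

lemma sum_inner_nonneg {ι : Type*} [Fintype ι] (hT : IsUCP T) (a : ι → BH) (ξ : ι → H2) :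
    0 ≤ ∑ i, ∑ j, ⟪ξ i, T (star (a i) * a j) (ξ j)⟫_ℂ := by
  let e := (Fintype.equivFin ι).symm
  rw [← e.sum_comp]
  simp_rw [← e.sum_comp (fun j ↦ ⟪ξ _, T (star (a _) * a j) (ξ j)⟫_ℂ)]
  exact hT.2.2.2 _ (a ∘ e) (ξ ∘ e)

lemma inner_nonneg (hT : IsUCP T) (a : BH) (ξ : H2) : 0 ≤ ⟪ξ, T (star a * a) ξ⟫_ℂ := by
  simpa using hT.sum_inner_nonneg (fun _ : Unit ↦ a) (fun _ ↦ ξ)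

lemma posSemidef_gram {ι : Type*} [Fintype ι] (hT : IsUCP T) (a : ι → BH) (ξ : ι → H2) :
    (Matrix.of fun i j ↦ ⟪ξ i, T (star (a i) * a j) (ξ j)⟫_ℂ).PosSemidef := by
  refine .of_dotProduct_mulVec_nonneg_complex fun c ↦ ?_
  convert hT.sum_inner_nonneg a (fun i ↦ c i • ξ i) using 1
  simp only [dotProduct, Matrix.mulVec, mul_sum, map_smul, inner_smul_left, inner_smul_right,
    Matrix.of_apply, Pi.star_apply, RCLike.star_def]
  congr! 2 with i _ j
  ring

end IsUCP

namespace IsQBDC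

variable {T : BH → BH}

lemma inner_T_mU_self_eq_zero (hT : IsQBDC T) {n a : ℕ} (h : n ∉ Icc (a - 1) (a + 1)) :
    ⟪ee a, T (mU n n) (ee a)⟫_ℂ = 0 := by
  have hpa : pI (n - 1) (n + 1) (ee a) = 0 := by
    rw [pI_apply_ee, if_neg]
    simp only [mem_Icc] at h ⊢
    omega
  have hle := (hT.2 n n le_rfl).2.inner_nonneg_right (ee a)
  rw [sub_apply, hpa, zero_sub, pI_self, inner_neg_right, neg_nonneg] at hle
  refine le_antisymm hle ?_
  simpa [star_mU_zero_mul] using hT.1.inner_nonneg (mU 0 n) (ee a)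

lemma inner_T_mU_eq_zero (hT : IsQBDC T) {n m a b : ℕ}
    (h : n ∉ Icc (a - 1) (a + 1) ∨ m ∉ Icc (b - 1) (b + 1)) :
    ⟪ee a, T (mU n m) (ee b)⟫_ℂ = 0 := by
  have hG := hT.1.posSemidef_gram ![mU 0 n, mU 0 m] ![ee a, ee b]
  simpa [star_mU_zero_mul] using hG.apply_eq_zero_of_diag_eq_zero (i := 0) (j := 1)
    (by simpa [star_mU_zero_mul] using
      h.imp hT.inner_T_mU_self_eq_zero hT.inner_T_mU_self_eq_zero)

lemma TU_eq_sum_of_subset (hT : IsQBDC T) (A : ℕ → ℕ → ℂ) {a b : ℕ} {R : Finset ℕ}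
    (ha : Icc (a - 1) (a + 1) ⊆ R) (hb : Icc (b - 1) (b + 1) ⊆ R) :
    TU T A a b = ∑ n ∈ R, ∑ m ∈ R, A n m * ⟪ee a, T (mU n m) (ee b)⟫_ℂ := by
  rw [TU, sum_subset ha fun n _ hn ↦ sum_eq_zero fun m _ ↦ by
    rw [hT.inner_T_mU_eq_zero (.inl hn), mul_zero]]
  refine sum_congr rfl fun n _ ↦ sum_subset hb fun m _ hm ↦ ?_
  rw [hT.inner_T_mU_eq_zero (.inr hm), mul_zero]

lemma Qf_TU_eq (hT : IsQBDC T) (A : ℕ → ℕ → ℂ) (ξ : ℕ →₀ ℂ) {R : Finset ℕ}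
    (hR : ∀ a ∈ ξ.support, Icc (a - 1) (a + 1) ⊆ R) :
    Qf (TU T A) ξ = ∑ n ∈ R, ∑ m ∈ R, A n m *
      ⟪Finsupp.linearCombination ℂ ee ξ, T (mU n m) (Finsupp.linearCombination ℂ ee ξ)⟫_ℂ := by
  let X : BH := ∑ n ∈ R, ∑ m ∈ R, A n m • T (mU n m)
  have hX : ∀ a ∈ ξ.support, ∀ b ∈ ξ.support, TU T A a b = ⟪ee a, X (ee b)⟫_ℂ := by
    intro a ha b hb
    simp [X, hT.TU_eq_sum_of_subset A (hR a ha) (hR b hb)]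
  calc Qf (TU T A) ξ = Qf (fun a b ↦ ⟪ee a, X (ee b)⟫_ℂ) ξ :=
        sum_congr rfl fun a ha ↦ sum_congr rfl fun b hb ↦ by rw [hX a ha b hb]
    _ = _ := by rw [Qf_inner_ee]; simp [X]

lemma Qf_TU_nonneg (hT : IsQBDC T) {A : ℕ → ℕ → ℂ} (hA : ∀ ξ, 0 ≤ Qf A ξ)
    (ξ : ℕ →₀ ℂ) : 0 ≤ Qf (TU T A) ξ := by
  let R := ξ.support.biUnion fun a ↦ Icc (a - 1) (a + 1)
  rw [hT.Qf_TU_eq A ξ (R := R) fun a ha ↦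
    subset_biUnion_of_mem (fun a ↦ Icc (a - 1) (a + 1)) ha]
  have hG := hT.1.posSemidef_gram (fun n : R ↦ mU 0 n) fun _ ↦ Finsupp.linearCombination ℂ ee ξ
  simpa [star_mU_zero_mul, ← sum_coe_sort R] using
    ((posSemidef_of_Qf_nonneg hA).submatrix ((↑) : R → ℕ)).sum_hadamard_nonneg hG

end IsQBDC

/-- **A QBDC preserves positivity of quadratic forms of (unbounded) operators
with domain D = span{e_n}.** Here `TU T` is the extension of `T` to operators
encoded by their matrices, via `T(A) = strong-lim_N ∑_{n,m ≤ N} A_{n,m} T(e_{n,m})`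
(the strong limit is locally a finite sum, by the nearest-neighbour property of a QBDC). -/
theorem qbdc_preserves_positive_forms
    (T : BH → BH) (hT : IsQBDC T)
    (A : ℕ → ℕ → ℂ) (hA : ∀ ξ : ℕ →₀ ℂ, 0 ≤ Qf A ξ) :
    ∀ (n : ℕ) (ξ : ℕ →₀ ℂ), 0 ≤ Qf ((TU T)^[n] A) ξ := by
  intro n
  induction n with
  | zero => exact hA
  | succ k ih =>
    rw [Function.iterate_succ_apply']
    exact hT.Qf_TU_nonneg ih

end
end
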